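/- arXiv:1006.1594 — 2 statements merged into one kernel-verified Lean document; each statement's English description precedes it below -/
import Mathlib

section
/- Let η be a real symmetric 3×3 positive semidefinite matrix with diagonal entries a, b, c and off-diagonal entries d, e, f (so η = [[a,d,e],[d,b,f],[e,f,c]]). Then the matrix η̃ = [[a,|d|,|e|],[|d|,b,|f|],[|e|,|f|,c]] obtained by taking absolute values of the off-diagonal entries is also positive semidefinite. -/
/-!
Write `Q(x, y, z)` for the quadratic form of `η` and `Q̃` for that of `η̃`. Since
`(xy)(yz)(zx) = (xyz)² ≥ 0`, one of the products `xy`, `yz`, `zx` is nonnegative; after a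
cyclic relabelling it is `yz`. Choose signs `s, t = ±1` with `s d = |d|` and `t e = |e|`. Then
`Q(x, s y, t z)` and `Q̃(x, y, z)` differ only in the `yz` term, where `st f · yz ≤ |f| · yz`,
so `Q̃(x, y, z) ≥ Q(x, s y, t z) ≥ 0`. This is special to dimension three: in general the
pairs with `xᵢ xⱼ < 0` may form a cycle, whose sign constraints cannot all be met.
-/

lemma exists_abs_eq_one_mul_eq_abs (d : ℝ) : ∃ s : ℝ, |s| = 1 ∧ s * d = |d| := by
  rcases abs_cases d with ⟨hd, -⟩ | ⟨hd, -⟩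
  · exact ⟨1, abs_one, by rw [hd, one_mul]⟩
  · exact ⟨-1, by rw [abs_neg, abs_one], by rw [hd, neg_one_mul]⟩

lemma mul_nonneg_or_mul_nonneg_or_mul_nonneg (x y z : ℝ) :
    0 ≤ y * z ∨ 0 ≤ z * x ∨ 0 ≤ x * y := by
  by_contra! h
  obtain ⟨hyz, hzx, hxy⟩ := h
  nlinarith [mul_self_nonneg (x * y * z), mul_pos_of_neg_of_neg hyz hzx]

def ternaryForm (a b c d e f x y z : ℝ) : ℝ :=
  a * x ^ 2 + b * y ^ 2 + c * z ^ 2 + 2 * d * x * y + 2 * e * x * z + 2 * f * y * z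

section TernaryForm

variable {a b c d e f : ℝ}

lemma ternaryForm_rotate (x y z : ℝ) :
    ternaryForm a b c d e f x y z = ternaryForm b c a f d e y z x := by
  unfold ternaryForm; ring

lemma ternaryForm_abs_nonneg_of_mul_nonneg (hQ : ∀ x y z, 0 ≤ ternaryForm a b c d e f x y z)
    {x y z : ℝ} (hyz : 0 ≤ y * z) : 0 ≤ ternaryForm a b c |d| |e| |f| x y z := by
  obtain ⟨s, hs, hsd⟩ := exists_abs_eq_one_mul_eq_abs d
  obtain ⟨t, ht, hte⟩ := exists_abs_eq_one_mul_eq_abs e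
  have hst : s * t * f ≤ |f| :=
    calc s * t * f ≤ |s * t * f| := le_abs_self _
      _ = |f| := by rw [abs_mul, abs_mul, hs, ht, one_mul, one_mul]
  have hs2 : s ^ 2 = 1 := by rw [← sq_abs, hs, one_pow]
  have ht2 : t ^ 2 = 1 := by rw [← sq_abs, ht, one_pow]
  have hflip : ternaryForm a b c d e f x (s * y) (t * z)
      = ternaryForm a b c |d| |e| |f| x y z - 2 * (|f| - s * t * f) * (y * z) := by
    rw [← hsd, ← hte]
    unfold ternaryForm
    linear_combination (b * y ^ 2) * hs2 + (c * z ^ 2) * ht2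
  linarith [hQ x (s * y) (t * z), mul_nonneg (sub_nonneg.mpr hst) hyz]

theorem ternaryForm_abs_nonneg (hQ : ∀ x y z, 0 ≤ ternaryForm a b c d e f x y z) (x y z : ℝ) :
    0 ≤ ternaryForm a b c |d| |e| |f| x y z := by
  have hQ' : ∀ x y z, 0 ≤ ternaryForm b c a f d e x y z := fun x y z => by
    rw [← ternaryForm_rotate]; exact hQ z x y
  have hQ'' : ∀ x y z, 0 ≤ ternaryForm c a b e f d x y z := fun x y z => by
    rw [← ternaryForm_rotate]; exact hQ' z x y
  rcases mul_nonneg_or_mul_nonneg_or_mul_nonneg x y z with h | h | h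
  · exact ternaryForm_abs_nonneg_of_mul_nonneg hQ h
  · rw [ternaryForm_rotate]; exact ternaryForm_abs_nonneg_of_mul_nonneg hQ' h
  · rw [ternaryForm_rotate, ternaryForm_rotate]; exact ternaryForm_abs_nonneg_of_mul_nonneg hQ'' h

namespace Matrix

lemma posSemidef_iff_ternaryForm_nonneg :
    PosSemidef !![a, d, e; d, b, f; e, f, c] ↔ ∀ x y z, 0 ≤ ternaryForm a b c d e f x y z := by
  have hdot (x : Fin 3 → ℝ) : star x ⬝ᵥ (!![a, d, e; d, b, f; e, f, c] *ᵥ x)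
      = ternaryForm a b c d e f (x 0) (x 1) (x 2) := by
    simp only [dotProduct, Pi.star_apply, star_trivial, mulVec, of_apply, cons_val',
      cons_val_fin_one, Fin.sum_univ_three, cons_val_zero, cons_val_one, cons_val, ternaryForm]
    ring
  have hherm : IsHermitian !![a, d, e; d, b, f; e, f, c] := by
    ext i j
    fin_cases i <;> fin_cases j <;> rfl
  rw [posSemidef_iff_dotProduct_mulVec]
  simp only [hherm, hdot, true_and]
  exact ⟨fun h x y z => by simpa using h ![x, y, z], fun h x => h _ _ _⟩

end Matrix

end TernaryForm

/-- If the real symmetric 3×3 matrix η = [[a,d,e],[d,b,f],[e,f,c]] is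
positive semidefinite, then so is the matrix obtained by replacing the off-diagonal
entries with their absolute values. -/
theorem stmt_0 (a b c d e f : ℝ)
    (h : Matrix.PosSemidef !![a, d, e; d, b, f; e, f, c]) :
    Matrix.PosSemidef !![a, |d|, |e|; |d|, b, |f|; |e|, |f|, c] :=
  Matrix.posSemidef_iff_ternaryForm_nonneg.mpr
    (ternaryForm_abs_nonneg (Matrix.posSemidef_iff_ternaryForm_nonneg.mp h))
end

section
/- Let γ be a 9×9 real symmetric matrix in 3×3 block form with blocks A, B, C on the diagonal and off-diagonal blocks D, E, F. Suppose there exist real symmetric matrices κ_A, κ_B, κ_C each of trace d−1 such that γ − κ_A ⊕ κ_B ⊕ κ_C ≥ 0. Then the 3×3 matrix [[Tr(A)−d+1, Σ_i|D_{ii}|, Σ_i|E_{ii}|],[Σ_i|D_{ii}|, Tr(B)−d+1, Σ_i|F_{ii}|],[Σ_i|E_{ii}|, Σ_i|F_{ii}|, Tr(C)−d+1]] is positive semidefinite. -/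
/-!
For each `i`, the principal submatrix of `γ - κA ⊕ κB ⊕ κC` on the `i`-th coordinates of the
three blocks is positive semidefinite, and its diagonal entries sum over `i` to `Tr A - (d - 1)`,
`Tr B - (d - 1)`, `Tr C - (d - 1)`. Taking absolute values of the off-diagonal entries of a 3×3
PSD matrix keeps it PSD: a diagonal sign conjugation turns them all into `|·|` when their product
is `≥ 0`, and into `-|·|` otherwise; in the latter case the quadratic form of the absolute-value
matrix at `v` dominates that of the conjugated one at `|v|`. Summing over `i` gives the result.
-/

open Matrix

theorem Matrix.PosSemidef.of_offDiag_le_neg_abs {n : Type*} [Fintype n] {P Q : Matrix n n ℝ}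
    (hP : P.PosSemidef) (hQ : Q.IsHermitian) (hdiag : ∀ i, Q i i = P i i)
    (hoff : ∀ i j, i ≠ j → P i j ≤ -|Q i j|) : Q.PosSemidef := by
  refine .of_dotProduct_mulVec_nonneg hQ fun v => ?_
  have hterm : ∀ i j, |v i| * (P i j * |v j|) ≤ v i * (Q i j * v j) := by
    intro i j
    rcases eq_or_ne i j with rfl | hij
    · rw [hdiag]
      exact (by linear_combination P i i * abs_mul_abs_self (v i) :
        |v i| * (P i i * |v i|) = v i * (P i i * v i)).le
    · have hQv : -(|Q i j| * (|v i| * |v j|)) ≤ v i * (Q i j * v j) := by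
        simpa only [abs_mul, mul_left_comm, mul_comm, mul_assoc] using
          neg_abs_le (v i * (Q i j * v j))
      have hv : 0 ≤ |v i| * |v j| := by positivity
      nlinarith [hoff i j hij]
  calc 0 ≤ (fun i => |v i|) ⬝ᵥ (P *ᵥ fun i => |v i|) := by
        simpa using hP.dotProduct_mulVec_nonneg (fun i => |v i|)
    _ ≤ star v ⬝ᵥ (Q *ᵥ v) := by
        simp only [dotProduct, mulVec, Finset.mul_sum, star_trivial]
        exact Finset.sum_le_sum fun i _ => Finset.sum_le_sum fun j _ => hterm i j

theorem exists_signs_mul_eq_abs {x y z : ℝ} (h : 0 ≤ x * y * z) :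
    ∃ e₁ e₂ e₃ : ℝ, e₁ ^ 2 = 1 ∧ e₂ ^ 2 = 1 ∧ e₃ ^ 2 = 1 ∧
      e₁ * e₂ * x = |x| ∧ e₁ * e₃ * y = |y| ∧ e₂ * e₃ * z = |z| := by
  have sign_of (t : ℝ) : ∃ s : ℝ, s ^ 2 = 1 ∧ s * t = |t| := by
    rcases abs_choice t with h | h
    · exact ⟨1, by norm_num, by rw [h, one_mul]⟩
    · exact ⟨-1, by norm_num, by rw [h, neg_one_mul]⟩
  obtain ⟨sx, hsx, hx⟩ := sign_of x
  obtain ⟨sy, hsy, hy⟩ := sign_of y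
  obtain ⟨sz, hsz, hz⟩ := sign_of z
  rcases eq_or_ne x 0 with rfl | hx0
  · exact ⟨sy, sz, 1, hsy, hsz, one_pow 2, by simp, by rw [mul_one, hy],
      by rw [mul_one, hz]⟩
  rcases eq_or_ne y 0 with rfl | hy0
  · exact ⟨sx, 1, sz, hsx, one_pow 2, hsz, by rw [mul_one, hx], by simp,
      by rw [one_mul, hz]⟩
  refine ⟨1, sx, sy, one_pow 2, hsx, hsy, by rw [one_mul, hx], by rw [one_mul, hy], ?_⟩
  have hxy : 0 < |x * y| := abs_pos.mpr (mul_ne_zero hx0 hy0)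
  have hprod : sx * sy * z * |x * y| = x * y * z := by
    rw [abs_mul, ← hx, ← hy]
    linear_combination (sy ^ 2 * (x * y * z)) * hsx + (x * y * z) * hsy
  have hnn : 0 ≤ sx * sy * z := nonneg_of_mul_nonneg_left (hprod ▸ h) hxy
  rw [← abs_of_nonneg hnn]
  exact (sq_eq_sq_iff_abs_eq_abs _ _).mp
    (by linear_combination (sy ^ 2 * z ^ 2) * hsx + z ^ 2 * hsy)

theorem posSemidef_abs_offDiag_three {a b c x y z : ℝ}
    (h : (!![a, x, y; x, b, z; y, z, c]).PosSemidef) :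
    (!![a, |x|, |y|; |x|, b, |z|; |y|, |z|, c]).PosSemidef := by
  have hconj (e₁ e₂ e₃ : ℝ) :
      (!![e₁ ^ 2 * a, e₁ * e₂ * x, e₁ * e₃ * y; e₁ * e₂ * x, e₂ ^ 2 * b, e₂ * e₃ * z;
        e₁ * e₃ * y, e₂ * e₃ * z, e₃ ^ 2 * c]).PosSemidef := by
    convert h.mul_mul_conjTranspose_same (diagonal ![e₁, e₂, e₃]) using 1
    ext i j; fin_cases i <;> fin_cases j <;> simp <;> ring
  rcases le_or_gt 0 (x * y * z) with hxyz | hxyz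
  · obtain ⟨e₁, e₂, e₃, h₁, h₂, h₃, hx, hy, hz⟩ := exists_signs_mul_eq_abs hxyz
    simpa only [h₁, h₂, h₃, hx, hy, hz, one_mul] using hconj e₁ e₂ e₃
  · obtain ⟨e₁, e₂, e₃, h₁, h₂, h₃, hx, hy, hz⟩ :=
      exists_signs_mul_eq_abs (x := -x) (y := -y) (z := -z) (by linarith)
    rw [abs_neg, mul_neg, neg_eq_iff_eq_neg] at hx hy hz
    refine (hconj e₁ e₂ e₃).of_offDiag_le_neg_abs ?_ ?_ ?_
    · ext i j; fin_cases i <;> fin_cases j <;> simp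
    · intro i; fin_cases i <;> simp [h₁, h₂, h₃]
    · intro i j hij; fin_cases i <;> fin_cases j <;> simp_all

theorem submatrix_fromBlocks_three_diag {n R : Type*} (A B C D E F : Matrix n n R) (i : n) :
    (fromBlocks A (fromCols D E) (fromRows Dᵀ Eᵀ) (fromBlocks B F Fᵀ C)).submatrix
        ![.inl i, .inr (.inl i), .inr (.inr i)] ![.inl i, .inr (.inl i), .inr (.inr i)] =
      !![A i i, D i i, E i i; D i i, B i i, F i i; E i i, F i i, C i i] := by
  ext j k; fin_cases j <;> fin_cases k <;> rfl

theorem stmt_12_general (d : ℝ) (A B C D E F : Matrix (Fin 3) (Fin 3) ℝ)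
    (γ : Matrix (Fin 3 ⊕ (Fin 3 ⊕ Fin 3)) (Fin 3 ⊕ (Fin 3 ⊕ Fin 3)) ℝ)
    (hγ : γ = Matrix.fromBlocks A (Matrix.fromCols D E) (Matrix.fromRows Dᵀ Eᵀ)
      (Matrix.fromBlocks B F Fᵀ C))
    (κA κB κC : Matrix (Fin 3) (Fin 3) ℝ)
    (htrA : κA.trace = d - 1) (htrB : κB.trace = d - 1) (htrC : κC.trace = d - 1)
    (hpos : (γ - Matrix.fromBlocks κA 0 0 (Matrix.fromBlocks κB 0 0 κC)).PosSemidef) :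
    Matrix.PosSemidef
      !![A.trace - d + 1, ∑ i, |D i i|, ∑ i, |E i i|;
         ∑ i, |D i i|, B.trace - d + 1, ∑ i, |F i i|;
         ∑ i, |E i i|, ∑ i, |F i i|, C.trace - d + 1] := by
  have hblocks : γ - fromBlocks κA 0 0 (fromBlocks κB 0 0 κC) =
      fromBlocks (A - κA) (fromCols D E) (fromRows Dᵀ Eᵀ)
        (fromBlocks (B - κB) F Fᵀ (C - κC)) := by
    simp only [hγ, sub_eq_add_neg, fromBlocks_neg, fromBlocks_add, neg_zero, add_zero]
  have hterm (i : Fin 3) : (!![A i i - κA i i, |D i i|, |E i i|; |D i i|, B i i - κB i i, |F i i|;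
      |E i i|, |F i i|, C i i - κC i i]).PosSemidef := by
    refine posSemidef_abs_offDiag_three ?_
    simpa only [hblocks, submatrix_fromBlocks_three_diag, Matrix.sub_apply] using
      hpos.submatrix ![.inl i, .inr (.inl i), .inr (.inr i)]
  convert posSemidef_sum Finset.univ fun i _ => hterm i using 1
  simp only [trace, diag_apply] at htrA htrB htrC
  ext j k
  fin_cases j <;> fin_cases k <;>
    simp [Matrix.sum_apply, trace, Finset.sum_sub_distrib, htrA, htrB, htrC, sub_add]

/-- Proposition 9: let γ be the 9×9 real symmetric matrix with block
structure [[A,D,E],[Dᵀ,B,F],[Eᵀ,Fᵀ,C]]. If there exist real symmetric κ_A, κ_B, κ_C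
of trace d−1 with γ − κ_A ⊕ κ_B ⊕ κ_C ≥ 0, then the 3×3 matrix
[[Tr(A)−d+1, Σ|D_ii|, Σ|E_ii|],[Σ|D_ii|, Tr(B)−d+1, Σ|F_ii|],[Σ|E_ii|, Σ|F_ii|, Tr(C)−d+1]]
is positive semidefinite. -/
theorem stmt_12 (d : ℝ) (A B C D E F : Matrix (Fin 3) (Fin 3) ℝ)
    (γ : Matrix (Fin 3 ⊕ (Fin 3 ⊕ Fin 3)) (Fin 3 ⊕ (Fin 3 ⊕ Fin 3)) ℝ)
    (hγ : γ = Matrix.fromBlocks A (Matrix.fromCols D E) (Matrix.fromRows Dᵀ Eᵀ)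
      (Matrix.fromBlocks B F Fᵀ C))
    (κA κB κC : Matrix (Fin 3) (Fin 3) ℝ)
    (hκA : κA.IsHermitian) (hκB : κB.IsHermitian) (hκC : κC.IsHermitian)
    (htrA : κA.trace = d - 1) (htrB : κB.trace = d - 1) (htrC : κC.trace = d - 1)
    (hpos : (γ - Matrix.fromBlocks κA 0 0 (Matrix.fromBlocks κB 0 0 κC)).PosSemidef) :
    Matrix.PosSemidef
      !![A.trace - d + 1, ∑ i, |D i i|, ∑ i, |E i i|;
         ∑ i, |D i i|, B.trace - d + 1, ∑ i, |F i i|;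
         ∑ i, |E i i|, ∑ i, |F i i|, C.trace - d + 1] :=
  stmt_12_general d A B C D E F γ hγ κA κB κC htrA htrB htrC hpos
end
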